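/- Let k be a perfect field of prime characteristic p, let R = k[x₁,…,x_d], and let f ∈ R be a nonzero polynomial such that every monomial in the support of f is squarefree. Then f has level one, i.e., I_1(f^{p−1}) = R. -/

import Mathlib

/-!
Over a perfect ring `k` of characteristic `p`, `R = k[x]` is free over `R^p` with basis the
monomials `x^μ` with all exponents `< p`. The coordinate map `Φ_μ : h ↦ h_μ`, where
`h = ∑_μ (h_μ)^p x^μ`, is additive and satisfies `Φ_μ(r g^p) = Φ_μ(r) g`, so it maps `J^[p]`
into `J`. If all exponents of `g ≠ 0` are `< p`, its coordinates are constants, so whenever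
`g ∈ J^[p]`, the ideal `J` contains a nonzero constant. For squarefree `f`, the exponents of
`f^(p-1)` are at most `p - 1`.
-/

open MvPolynomial

/-- `J^[q]`: the ideal generated by the `q`-th powers of the elements of `J`. -/
def bracketPow {R : Type*} [CommRing R] (q : ℕ) (J : Ideal R) : Ideal R :=
  Ideal.span ((fun a => a ^ q) '' (J : Set R))

/-- `I_e(g)` (for the prime `p`): the smallest ideal `J` with `g ∈ J^[p^e]`. -/
def rootIdeal {R : Type*} [CommRing R] (p e : ℕ) (g : R) : Ideal R :=
  sInf {J : Ideal R | g ∈ bracketPow (p ^ e) J}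

/-- `f` has level `e`: `e` is the least integer `≥ 1` such that
`f^(p^e - p) ∈ (I_e(f^(p^e - 1)))^[p^e]`. -/
def HasLevel {R : Type*} [CommRing R] (p : ℕ) (f : R) (e : ℕ) : Prop :=
  IsLeast {e' : ℕ | 1 ≤ e' ∧
    f ^ (p ^ e' - p) ∈ bracketPow (p ^ e') (rootIdeal p e' (f ^ (p ^ e' - 1)))} e

namespace Finsupp

variable {σ : Type*} {p : ℕ}

theorem mapRange_mod_add_smul (m τ : σ →₀ ℕ) :
    (m + p • τ).mapRange (· % p) (Nat.zero_mod p) = m.mapRange (· % p) (Nat.zero_mod p) := by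
  ext i
  simp [Nat.add_mul_mod_self_left]

theorem mapRange_div_add_smul (hp : 0 < p) (m τ : σ →₀ ℕ) :
    (m + p • τ).mapRange (· / p) (Nat.zero_div p) =
      m.mapRange (· / p) (Nat.zero_div p) + τ := by
  ext i
  simp [Nat.add_mul_div_left _ _ hp]

theorem mapRange_mod_of_lt {m : σ →₀ ℕ} (hm : ∀ i, m i < p) :
    m.mapRange (· % p) (Nat.zero_mod p) = m := by
  ext i
  simp [Nat.mod_eq_of_lt (hm i)]

theorem mapRange_div_of_lt {m : σ →₀ ℕ} (hm : ∀ i, m i < p) :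
    m.mapRange (· / p) (Nat.zero_div p) = 0 := by
  ext i
  simp [Nat.div_eq_of_lt (hm i)]

end Finsupp

namespace MvPolynomial

section FrobeniusComponent

open scoped Classical

variable {σ k : Type*} [CommRing k] (p : ℕ) [ExpChar k p] [PerfectRing k p]

/-- For `μ` with all entries `< p`, the coordinate `h_μ` of `h = ∑_μ (h_μ)^p x^μ`. -/
noncomputable def frobeniusComponent (μ : σ →₀ ℕ) :
    MvPolynomial σ k →+ MvPolynomial σ k :=
  (Finsupp.liftAddHom fun m : σ →₀ ℕ =>
    if m.mapRange (· % p) (Nat.zero_mod p) = μ then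
      (monomial (m.mapRange (· / p) (Nat.zero_div p))).toAddMonoidHom.comp
        (frobeniusEquiv k p).symm.toAddMonoidHom
    else 0).comp AddMonoidAlgebra.coeffAddEquiv.toAddMonoidHom

variable {p}

theorem frobeniusComponent_monomial (μ m : σ →₀ ℕ) (a : k) :
    frobeniusComponent p μ (monomial m a) =
      if m.mapRange (· % p) (Nat.zero_mod p) = μ then
        monomial (m.mapRange (· / p) (Nat.zero_div p)) ((frobeniusEquiv k p).symm a)
      else 0 := by
  change Finsupp.liftAddHom _ (Finsupp.single m a) = _
  rw [Finsupp.liftAddHom_apply_single]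
  split_ifs <;> rfl

theorem frobeniusComponent_mul_pow (μ : σ →₀ ℕ) (r g : MvPolynomial σ k) :
    frobeniusComponent p μ (r * g ^ p) = frobeniusComponent p μ r * g := by
  induction g using MvPolynomial.induction_on' with
  | add g₁ g₂ ih₁ ih₂ => rw [add_pow_expChar, mul_add, map_add, ih₁, ih₂, mul_add]
  | monomial τ b =>
    induction r using MvPolynomial.induction_on' with
    | add r₁ r₂ ih₁ ih₂ => rw [add_mul, map_add, ih₁, ih₂, map_add, add_mul]
    | monomial m a =>
      rw [monomial_pow, monomial_mul, frobeniusComponent_monomial, frobeniusComponent_monomial,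
        Finsupp.mapRange_mod_add_smul]
      split_ifs
      · rw [monomial_mul, Finsupp.mapRange_div_add_smul (expChar_pos k p), map_mul,
          frobeniusEquiv_symm_pow]
      · rw [zero_mul]

theorem frobeniusComponent_mem_of_mem_bracketPow (μ : σ →₀ ℕ)
    {J : Ideal (MvPolynomial σ k)} {h : MvPolynomial σ k} (hh : h ∈ bracketPow p J) :
    frobeniusComponent p μ h ∈ J := by
  suffices ∀ r, frobeniusComponent p μ (r * h) ∈ J by simpa using this 1
  induction hh using Submodule.span_induction with
  | mem _ hx =>
    obtain ⟨g, hg, rfl⟩ := hx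
    intro r
    rw [frobeniusComponent_mul_pow]
    exact J.mul_mem_left _ hg
  | zero => simp
  | add _ _ _ _ hx hy =>
    intro r
    rw [mul_add, map_add]
    exact J.add_mem (hx r) (hy r)
  | smul s _ _ hx =>
    intro r
    rw [smul_eq_mul, ← mul_assoc]
    exact hx (r * s)

theorem frobeniusComponent_eq_C_of_lt (μ : σ →₀ ℕ) {h : MvPolynomial σ k}
    (hh : ∀ m ∈ h.support, ∀ i, m i < p) :
    frobeniusComponent p μ h = C ((frobeniusEquiv k p).symm (h.coeff μ)) := by
  have hterm : ∀ m ∈ h.support, frobeniusComponent p μ (monomial m (h.coeff m)) =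
      if μ = m then C ((frobeniusEquiv k p).symm (h.coeff m)) else 0 := fun m hm => by
    simp only [frobeniusComponent_monomial, Finsupp.mapRange_mod_of_lt (hh m hm),
      Finsupp.mapRange_div_of_lt (hh m hm), eq_comm, C_apply]
  conv_lhs => rw [h.as_sum, map_sum]
  rw [Finset.sum_congr rfl hterm, Finset.sum_ite_eq]
  split_ifs with hμ
  · rfl
  · rw [notMem_support_iff.mp hμ, map_zero, map_zero]

end FrobeniusComponent

theorem rootIdeal_one_eq_top_of_exponents_lt {σ k : Type*} [Field k] (p : ℕ) [ExpChar k p]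
    [PerfectRing k p] {g : MvPolynomial σ k} (hg : g ≠ 0)
    (hlt : ∀ m ∈ g.support, ∀ i, m i < p) : rootIdeal p 1 g = ⊤ := by
  rw [rootIdeal, pow_one, sInf_eq_top]
  intro J hJ
  obtain ⟨μ, hμ⟩ := support_nonempty.mpr hg
  have hmem := frobeniusComponent_mem_of_mem_bracketPow μ hJ
  rw [frobeniusComponent_eq_C_of_lt μ hlt] at hmem
  refine J.eq_top_of_isUnit_mem hmem ((IsUnit.mk0 _ ?_).map C)
  exact (map_ne_zero_iff _ (frobeniusEquiv k p).symm.injective).mpr (mem_support_iff.mp hμ)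

end MvPolynomial

/-- If every monomial in the support of a nonzero `f ∈ k[x₁,…,x_d]` is squarefree, then `f`
has level one, i.e. `I_1(f^(p-1)) = R`. -/
theorem stmt_13 (p : ℕ) [Fact p.Prime] (k : Type*) [Field k] [CharP k p] [PerfectField k]
    (d : ℕ) (f : MvPolynomial (Fin d) k) (hf : f ≠ 0)
    (hsf : ∀ m ∈ f.support, ∀ i, m i ≤ 1) :
    rootIdeal p 1 (f ^ (p - 1)) = ⊤ := by
  refine rootIdeal_one_eq_top_of_exponents_lt p (pow_ne_zero _ hf) fun m hm i => ?_
  have hdeg : degreeOf i f ≤ 1 := degreeOf_le_iff.mpr fun m hm => hsf m hm i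
  calc m i ≤ degreeOf i (f ^ (p - 1)) := monomial_le_degreeOf i hm
    _ ≤ (p - 1) * degreeOf i f := degreeOf_pow_le i f (p - 1)
    _ ≤ p - 1 := by simpa using Nat.mul_le_mul_left (p - 1) hdeg
    _ < p := Nat.sub_lt (Fact.out : p.Prime).pos one_pos
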